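/- Let X_1,…,X_n be independent random variables with X_i exponentially distributed with rate h_i > 0, and let 0 ≤ d_1 ≤ d_2 ≤ ⋯ ≤ d_n be real shifts. Writing H_k = h_1 + ⋯ + h_k, the expected value of min_{1≤i≤n}(X_i + d_i) equals τ̄ = Σ_{i=1}^{n-1} (e^{Σ_{j=1}^{i} h_j d_j} / H_i) · [ (1 + H_i d_i) e^{-H_i d_i} − (1 + H_i d_{i+1}) e^{-H_i d_{i+1}} ] + (e^{Σ_{j=1}^{n} h_j d_j} / H_n) · (1 + H_n d_n) e^{-H_n d_n}. (This is the expected time τ̄ between two consecutive blocks in the coordinated blockchain model, Theorem 1 of the paper, with d_i = 2 l_i the round-trip latency of miner i to the coordinator; the overall system efficiency is η^C = (1/τ̄)/H_n.) -/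

import Mathlib

open MeasureTheory ProbabilityTheory Real

/-- `Hsum h k = h 0 + h 1 + ⋯ + h k` (partial sums of the mining rates, 0-indexed). -/
noncomputable def Hsum (h : ℕ → ℝ) (k : ℕ) : ℝ := ∑ j ∈ Finset.range (k + 1), h j

/-!
Since `M = min_i (X i + d i) ≥ 0`, `E[M] = ∫_{t > 0} P(M > t) dt`, and by independence
`P(M > t) = ∏ i, exp (-(h i * max (t - d i) 0))`. For `t ≥ d k` the first `k + 1` factors
multiply to `exp (c_k - H_k t)`, where `c_k = ∑_{j ≤ k} h j * d j`. Adding miner `k + 1` changes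
the survival function only on `(d (k + 1), ∞)`, so its integral changes by
`exp (c_{k+1} - H_{k+1} d (k + 1)) / H_{k+1} - exp (c_k - H_k d (k + 1)) / H_k`; the closed form
`τ̄` changes by the same amount, and induction on the number of miners gives the result.
-/

open Set

section Probability

variable {Ω : Type*} [MeasurableSpace Ω] {μ : Measure Ω}

lemma integral_eq_setIntegral_measureReal_lt [IsFiniteMeasure μ] {f : Ω → ℝ}
    (hf : 0 ≤ᵐ[μ] f) (hfm : AEMeasurable f μ)
    (hint : IntegrableOn (fun t ↦ μ.real {ω | t < f ω}) (Ioi 0)) :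
    ∫ ω, f ω ∂μ = ∫ t in Ioi 0, μ.real {ω | t < f ω} := by
  refine Integrable.integral_eq_integral_meas_lt ?_ hf
  refine (lintegral_ofReal_ne_top_iff_integrable hfm.aestronglyMeasurable hf).1 ?_
  rw [lintegral_eq_lintegral_meas_lt μ hf hfm]
  have h := hint.lintegral_lt_top
  simp only [ofReal_measureReal (measure_ne_top μ _)] at h
  exact h.ne

lemma ProbabilityTheory.iIndepFun.measureReal_lt_iInf {ι : Type*} [Fintype ι] [Nonempty ι]
    {X : ι → Ω → ℝ} (hX : iIndepFun X μ) (t : ℝ) :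
    μ.real {ω | t < ⨅ i, X i ω} = ∏ i, μ.real {ω | t < X i ω} := by
  have hset : {ω | t < ⨅ i, X i ω} = ⋂ i, X i ⁻¹' Ioi t := by
    ext ω
    simp only [mem_ofPred_eq, mem_iInter, mem_preimage, mem_Ioi]
    refine ⟨fun h i ↦ h.trans_le (ciInf_le (Finite.bddBelow_range _) i), fun h ↦ ?_⟩
    obtain ⟨j, hj⟩ := exists_eq_ciInf_of_finite (f := fun i ↦ X i ω)
    exact hj ▸ h j
  rw [hset, measureReal_def, hX.meas_iInter fun i ↦ ⟨Ioi t, measurableSet_Ioi, rfl⟩,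
    ENNReal.toReal_prod]
  rfl

lemma ae_nonneg_expMeasure (r : ℝ) : ∀ᵐ x ∂expMeasure r, 0 ≤ x := by
  rw [ae_iff]
  simp only [not_le]
  change expMeasure r (Iio 0) = 0
  rw [expMeasure, gammaMeasure, withDensity_apply _ measurableSet_Iio]
  exact lintegral_exponentialPDF_of_nonpos le_rfl

lemma expMeasure_real_Ioi {r : ℝ} (hr : 0 < r) (s : ℝ) :
    (expMeasure r).real (Ioi s) = exp (-(r * max s 0)) := by
  have := isProbabilityMeasure_expMeasure hr
  rw [← compl_Iic, measureReal_compl measurableSet_Iic, probReal_univ, ← cdf_eq_real,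
    cdf_expMeasure_eq hr]
  split_ifs with hs
  · rw [max_eq_left hs, sub_sub_cancel]
  · rw [max_eq_right (not_le.1 hs).le]
    simp

lemma measureReal_lt_add_of_map_eq_expMeasure {X : Ω → ℝ} (hX : Measurable X) {r : ℝ}
    (hr : 0 < r) (hlaw : μ.map X = expMeasure r) (t c : ℝ) :
    μ.real {ω | t < X ω + c} = exp (-(r * max (t - c) 0)) := by
  have hset : {ω | t < X ω + c} = X ⁻¹' Ioi (t - c) := by
    ext ω
    simp [sub_lt_iff_lt_add]
  rw [hset, ← map_measureReal_apply hX measurableSet_Ioi, hlaw, expMeasure_real_Ioi hr]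

end Probability

section Survival

lemma integrableOn_exp_sub_mul_Ioi (c : ℝ) {b : ℝ} (hb : 0 < b) (a : ℝ) :
    IntegrableOn (fun t ↦ exp (c - b * t)) (Ioi a) := by
  simp_rw [sub_eq_add_neg, exp_add, ← neg_mul]
  exact (integrableOn_exp_mul_Ioi (neg_neg_of_pos hb) a).const_mul _

lemma integral_exp_sub_mul_Ioi (c : ℝ) {b : ℝ} (hb : 0 < b) (a : ℝ) :
    ∫ t in Ioi a, exp (c - b * t) = exp (c - b * a) / b := by
  simp_rw [sub_eq_add_neg, exp_add, ← neg_mul]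
  rw [integral_const_mul, integral_exp_mul_Ioi (neg_neg_of_pos hb)]
  field_simp

variable (h d : ℕ → ℝ)

/-- The survival function `t ↦ P(min_{i<k} (X i + d i) > t)` for independent `X i ~ Exp(h i)`. -/
noncomputable def minSurvival (k : ℕ) (t : ℝ) : ℝ :=
  ∏ i ∈ Finset.range k, exp (-(h i * max (t - d i) 0))

variable {h d}

lemma continuous_minSurvival (k : ℕ) : Continuous (minSurvival h d k) :=
  continuous_finsetProd _ fun _ _ ↦ by fun_prop

lemma minSurvival_succ_of_le {k : ℕ} {t : ℝ} (ht : t ≤ d k) :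
    minSurvival h d (k + 1) t = minSurvival h d k t := by
  simp [minSurvival, Finset.prod_range_succ, max_eq_right (sub_nonpos.2 ht)]

lemma minSurvival_of_forall_le {k : ℕ} {t : ℝ} (ht : ∀ i < k, d i ≤ t) :
    minSurvival h d k t =
      exp (∑ i ∈ Finset.range k, h i * d i - (∑ i ∈ Finset.range k, h i) * t) := by
  rw [minSurvival, ← exp_sum, Finset.sum_mul, ← Finset.sum_sub_distrib]
  refine congrArg exp (Finset.sum_congr rfl fun i hi ↦ ?_)
  rw [max_eq_left (sub_nonneg.2 (ht i (Finset.mem_range.1 hi)))]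
  ring

lemma integral_minSurvival_Ioi {k : ℕ} (hH : 0 < ∑ i ∈ Finset.range k, h i) {a : ℝ}
    (ha : ∀ i < k, d i ≤ a) :
    ∫ t in Ioi a, minSurvival h d k t =
      exp (∑ i ∈ Finset.range k, h i * d i - (∑ i ∈ Finset.range k, h i) * a) /
        ∑ i ∈ Finset.range k, h i := by
  rw [setIntegral_congr_fun measurableSet_Ioi fun t ht ↦
    minSurvival_of_forall_le fun i hi ↦ (ha i hi).trans (le_of_lt ht)]
  exact integral_exp_sub_mul_Ioi _ hH a

lemma integrableOn_minSurvival {k : ℕ} (hH : 0 < ∑ i ∈ Finset.range k, h i) (a : ℝ) :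
    IntegrableOn (minSurvival h d k) (Ioi a) := by
  set D := ∑ i ∈ Finset.range k, |d i|
  have hD : ∀ i < k, d i ≤ D := fun i hi ↦ (le_abs_self _).trans
    (Finset.single_le_sum (fun j _ ↦ abs_nonneg (d j)) (Finset.mem_range.2 hi))
  have htail : IntegrableOn (minSurvival h d k) (Ioi D) :=
    (integrableOn_exp_sub_mul_Ioi _ hH D).congr_fun
      (fun t ht ↦ (minSurvival_of_forall_le fun i hi ↦ (hD i hi).trans (le_of_lt ht)).symm)
      measurableSet_Ioi
  exact (((continuous_minSurvival k).integrableOn_Icc).union htail).mono_set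
    (Ioi_subset_Ici_self.trans Ici_subset_Icc_union_Ioi)

end Survival

section TauBar

variable {h d : ℕ → ℝ}

lemma Hsum_pos {k : ℕ} (hh : ∀ i ≤ k, 0 < h i) : 0 < Hsum h k :=
  Finset.sum_pos (fun i hi ↦ hh i (Nat.lt_succ_iff.1 (Finset.mem_range.1 hi)))
    Finset.nonempty_range_add_one

variable (h d) in
/-- The closed form `τ̄` for the first `k + 1` miners. -/
noncomputable def tauBar (k : ℕ) : ℝ :=
  (∑ i ∈ Finset.range k,
    (exp (∑ j ∈ Finset.range (i + 1), h j * d j) / Hsum h i) *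
      ((1 + Hsum h i * d i) * exp (-(Hsum h i * d i)) -
        (1 + Hsum h i * d (i + 1)) * exp (-(Hsum h i * d (i + 1)))))
  + (exp (∑ j ∈ Finset.range (k + 1), h j * d j) / Hsum h k) *
      ((1 + Hsum h k * d k) * exp (-(Hsum h k * d k)))

lemma tauBar_zero (hh : h 0 ≠ 0) : tauBar h d 0 = d 0 + 1 / h 0 := by
  have hinv : exp (h 0 * d 0) * exp (-(h 0 * d 0)) = 1 := by
    rw [← exp_add, add_neg_cancel, exp_zero]
  simp only [tauBar, Hsum, zero_add, Finset.sum_range_zero, Finset.sum_range_one]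
  field_simp
  linear_combination (1 + h 0 * d 0) * hinv

lemma tauBar_succ (k : ℕ) (hk : Hsum h k ≠ 0) (hk' : Hsum h (k + 1) ≠ 0) :
    tauBar h d (k + 1) = tauBar h d k
      - exp (∑ j ∈ Finset.range (k + 1), h j * d j - Hsum h k * d (k + 1)) / Hsum h k
      + exp (∑ j ∈ Finset.range (k + 2), h j * d j - Hsum h (k + 1) * d (k + 1)) /
          Hsum h (k + 1) := by
  -- continuity of the survival function at `d (k + 1)`, where the new factor is `1`
  have hc : ∑ j ∈ Finset.range (k + 2), h j * d j - Hsum h (k + 1) * d (k + 1) =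
      ∑ j ∈ Finset.range (k + 1), h j * d j - Hsum h k * d (k + 1) := by
    simp only [Hsum, Finset.sum_range_succ _ (k + 1)]
    ring
  have hx : exp (∑ j ∈ Finset.range (k + 1), h j * d j) * exp (-(Hsum h k * d (k + 1))) =
      exp (∑ j ∈ Finset.range (k + 1), h j * d j - Hsum h k * d (k + 1)) := by
    rw [← exp_add, sub_eq_add_neg]
  have hx' : exp (∑ j ∈ Finset.range (k + 2), h j * d j) * exp (-(Hsum h (k + 1) * d (k + 1))) =
      exp (∑ j ∈ Finset.range (k + 1), h j * d j - Hsum h k * d (k + 1)) := by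
    rw [← exp_add, ← sub_eq_add_neg, hc]
  rw [hc, tauBar, tauBar, Finset.sum_range_succ]
  field_simp
  linear_combination (norm := ring_nf)
    (-Hsum h (k + 1) - d (k + 1) * Hsum h k * Hsum h (k + 1)) * hx +
      (Hsum h k + d (k + 1) * Hsum h k * Hsum h (k + 1)) * hx'

end TauBar

section Integral

variable {h d : ℕ → ℝ}

lemma integral_minSurvival_succ {k : ℕ} (hH : 0 < ∑ i ∈ Finset.range (k + 1), h i)
    (hdk : 0 ≤ d k) :
    ∫ t in Ioi 0, minSurvival h d (k + 1) t =
      (∫ t in (0)..d k, minSurvival h d k t) + ∫ t in Ioi (d k), minSurvival h d (k + 1) t := by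
  rw [← intervalIntegral.integral_interval_add_Ioi (integrableOn_minSurvival hH 0)
    (integrableOn_minSurvival hH (d k))]
  congr 1
  refine intervalIntegral.integral_congr fun t ht ↦ minSurvival_succ_of_le ?_
  rw [uIcc_of_le hdk] at ht
  exact ht.2

lemma integral_minSurvival {k : ℕ} (hh : ∀ i ≤ k, 0 < h i) (hd0 : 0 ≤ d 0)
    (hd : MonotoneOn d (Iic k)) :
    ∫ t in Ioi 0, minSurvival h d (k + 1) t = tauBar h d k := by
  induction k with
  | zero =>
    have hh0 := hh 0 le_rfl
    have hH : 0 < ∑ i ∈ Finset.range 1, h i := by simpa using hh0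
    rw [integral_minSurvival_succ hH hd0, integral_minSurvival_Ioi hH (by simp),
      tauBar_zero hh0.ne']
    simp [minSurvival]
  | succ k ih =>
    have hH : 0 < Hsum h k := Hsum_pos fun i hi ↦ hh i (by omega)
    have hH' : 0 < Hsum h (k + 1) := Hsum_pos hh
    have hle : ∀ i < k + 2, d i ≤ d (k + 1) := fun i hi ↦
      hd (mem_Iic.2 (by omega)) (mem_Iic.2 le_rfl) (by omega)
    have hdk : 0 ≤ d (k + 1) := hd0.trans (hle 0 (by omega))
    rw [integral_minSurvival_succ hH' hdk,
      ← intervalIntegral.integral_Ioi_sub_Ioi (integrableOn_minSurvival hH 0) hdk,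
      ih (fun i hi ↦ hh i (by omega)) (hd.mono (Iic_subset_Iic.2 k.le_succ)),
      integral_minSurvival_Ioi hH fun i hi ↦ hle i (by omega), integral_minSurvival_Ioi hH' hle,
      tauBar_succ k hH.ne' hH'.ne']
    rfl

end Integral

theorem expectation_min_shifted_exponentials
    {Ω : Type*} [MeasurableSpace Ω] (μ : Measure Ω) [IsProbabilityMeasure μ]
    (n : ℕ) (hn : 0 < n) (h d : ℕ → ℝ)
    (hh : ∀ i < n, 0 < h i)
    (hd0 : 0 ≤ d 0) (hdmono : ∀ i, i + 1 < n → d i ≤ d (i + 1))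
    (X : ℕ → Ω → ℝ) (hXm : ∀ i, Measurable (X i))
    (hindep : iIndepFun (fun i : Fin n => X i) μ)
    (hlaw : ∀ i < n, μ.map (X i) = expMeasure (h i)) :
    ∫ ω, (⨅ i : Fin n, (X i ω + d i)) ∂μ =
      (∑ i ∈ Finset.range (n - 1),
        (Real.exp (∑ j ∈ Finset.range (i + 1), h j * d j) / Hsum h i) *
          ((1 + Hsum h i * d i) * Real.exp (-(Hsum h i * d i)) -
            (1 + Hsum h i * d (i + 1)) * Real.exp (-(Hsum h i * d (i + 1)))))
      + (Real.exp (∑ j ∈ Finset.range n, h j * d j) / Hsum h (n - 1)) *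
          ((1 + Hsum h (n - 1) * d (n - 1)) * Real.exp (-(Hsum h (n - 1) * d (n - 1)))) := by
  obtain ⟨k, rfl⟩ := Nat.exists_eq_add_one.2 hn
  have hd : MonotoneOn d (Iic k) :=
    monotoneOn_of_le_add_one ordConnected_Iic fun i _ _ hi ↦ hdmono i (Nat.lt_succ_of_le hi)
  have hsurv (t : ℝ) : μ.real {ω | t < ⨅ i : Fin (k + 1), (X i ω + d i)} =
      minSurvival h d (k + 1) t := by
    have hY : iIndepFun (fun (i : Fin (k + 1)) ω ↦ X i ω + d i) μ :=
      hindep.comp (fun i x ↦ x + d i) fun i ↦ measurable_add_const _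
    rw [hY.measureReal_lt_iInf, minSurvival, ← Fin.prod_univ_eq_prod_range]
    exact Finset.prod_congr rfl fun i _ ↦
      measureReal_lt_add_of_map_eq_expMeasure (hXm i) (hh i i.2) (hlaw i i.2) t (d i)
  have hnonneg : 0 ≤ᵐ[μ] fun ω ↦ ⨅ i : Fin (k + 1), (X i ω + d i) := by
    have hX : ∀ᵐ ω ∂μ, ∀ i : Fin (k + 1), 0 ≤ X i ω := ae_all_iff.2 fun i ↦
      ae_of_ae_map (hXm i).aemeasurable (hlaw i i.2 ▸ ae_nonneg_expMeasure (h i))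
    filter_upwards [hX] with ω hω
    exact le_ciInf fun i ↦ add_nonneg (hω i) (hd0.trans
      (hd (mem_Iic.2 (Nat.zero_le _)) (mem_Iic.2 (Nat.lt_succ_iff.1 i.2)) (Nat.zero_le _)))
  have hH : 0 < Hsum h k := Hsum_pos fun i hi ↦ hh i (Nat.lt_succ_of_le hi)
  rw [integral_eq_setIntegral_measureReal_lt hnonneg
      (Measurable.iInf fun i : Fin (k + 1) ↦ (hXm i).add_const (d i)).aemeasurable
      ((funext hsurv).symm ▸ integrableOn_minSurvival hH 0),
    funext hsurv, integral_minSurvival (fun i hi ↦ hh i (Nat.lt_succ_of_le hi)) hd0 hd]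
  rfl
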